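/- arXiv:1411.7801 — 2 statements merged into one kernel-verified Lean document; each statement's English description precedes it below -/
import Mathlib

section
/- Assume a breakdown-free Arnoldi decomposition of length j (j ≥ 2). Then: (i) the vector y_{s_j}^{(G)} ∈ ℂ^j defined by x_j^{(G)} = x_{j−1}^{(G)} + V_j y_{s_j}^{(G)} is the unique minimizer over y ∈ ℂ^j of ‖[β e₁^{[j]} − H̄_{j−1} y_{j−1}^{(G)}; 0] − H̄_j y‖₂ (the bracketed vector lies in ℂ^{j+1}, β e₁^{[j]} ∈ ℂ^j); (ii) the vector ỹ_{s_j}^{(F)} := H_j†(β e₁^{[j]} − H̄_{j−1} y_{j−1}^{(G)}) is a minimizer over y ∈ ℂ^j of ‖β e₁^{[j]} − H̄_{j−1} y_{j−1}^{(G)} − H_j y‖₂, and among all such minimizers it has smallest 2-norm. -/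
open Matrix

noncomputable section

set_option maxHeartbeats 1000000

/-- Squared Euclidean norm of a complex vector. -/
def vnSq {m : Type*} [Fintype m] (v : m → ℂ) : ℝ := ∑ i, Complex.normSq (v i)

/-- Euclidean (2-)norm of a complex vector. -/
def vnorm {m : Type*} [Fintype m] (v : m → ℂ) : ℝ := Real.sqrt (vnSq v)

/-- The four Moore–Penrose conditions: `P` is the Moore-Penrose pseudoinverse of `M`. -/
def IsMoorePenrose {a b : Type*} [Fintype a] [Fintype b]
    (M : Matrix a b ℂ) (P : Matrix b a ℂ) : Prop :=
  M * P * M = M ∧ P * M * P = P ∧ (M * P)ᴴ = M * P ∧ (P * M)ᴴ = P * M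

/-- The Krylov subspace `K_i(A, r) = span {r, A r, …, A^(i-1) r}`. -/
def krylov {n : ℕ} (A : Matrix (Fin n) (Fin n) ℂ) (r : Fin n → ℂ) (i : ℕ) :
    Submodule ℂ (Fin n → ℂ) :=
  Submodule.span ℂ { v | ∃ k < i, v = (A ^ k) *ᵥ r }

/-- The first standard basis vector `e₁ ∈ ℂ^(m+1)`. -/
def e1 (m : ℕ) : Fin (m+1) → ℂ := fun i => if i = 0 then 1 else 0

/-- `y` is the unique minimizer of `‖t - M y'‖₂` over all `y'`. -/
def IsUniqueVecMin {a b : Type*} [Fintype a] [Fintype b]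
    (M : Matrix a b ℂ) (t : a → ℂ) (y : b → ℂ) : Prop :=
  (∀ y', vnSq (t - M *ᵥ y) ≤ vnSq (t - M *ᵥ y')) ∧
  ∀ y', (∀ y'', vnSq (t - M *ᵥ y') ≤ vnSq (t - M *ᵥ y'')) → y' = y

/-- A breakdown-free (single-vector) Arnoldi decomposition of length `j = q + 1`
for the linear system `A x = b` with initial guess `x₀`. -/
structure ArnoldiSV (n q : ℕ) : Type where
  A : Matrix (Fin n) (Fin n) ℂ
  b : Fin n → ℂ
  x0 : Fin n → ℂ
  V : Matrix (Fin n) (Fin (q+2)) ℂ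
  Hbar : Matrix (Fin (q+2)) (Fin (q+1)) ℂ
  hn : q + 2 ≤ n
  r0_ne : b - A *ᵥ x0 ≠ 0
  orth : Vᴴ * V = 1
  v1 : ∀ r, V r 0 = (b - A *ᵥ x0) r / (vnorm (b - A *ᵥ x0) : ℂ)
  span : ∀ i : ℕ, i ≤ q + 2 →
    krylov A (b - A *ᵥ x0) i =
      Submodule.span ℂ { v | ∃ c : Fin (q+2), (c : ℕ) < i ∧ v = fun r => V r c }
  arnoldi : A * V.submatrix id Fin.castSucc = V * Hbar
  hess : ∀ (r : Fin (q+2)) (c : Fin (q+1)), (c : ℕ) + 1 < (r : ℕ) → Hbar r c = 0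
  subdiag : ∀ k : Fin (q+1), 0 < (Hbar k.succ k).re ∧ (Hbar k.succ k).im = 0

namespace ArnoldiSV

variable {n q : ℕ}

/-- The initial residual `r₀ = b - A x₀`. -/
def r0 (D : ArnoldiSV n q) : Fin n → ℂ := D.b - D.A *ᵥ D.x0

/-- `β = ‖r₀‖₂`. -/
def beta (D : ArnoldiSV n q) : ℝ := vnorm D.r0

/-- `H̄_{j-1}`, the leading `j × (j-1)` submatrix of `H̄_j`. -/
def Hprev (D : ArnoldiSV n q) : Matrix (Fin (q+1)) (Fin q) ℂ :=
  D.Hbar.submatrix Fin.castSucc Fin.castSucc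

/-- `H_j`, the leading `j × j` submatrix of `H̄_j`. -/
def Hsq (D : ArnoldiSV n q) : Matrix (Fin (q+1)) (Fin (q+1)) ℂ :=
  D.Hbar.submatrix Fin.castSucc id

/-- `V_j = [v₁ … v_j]`. -/
def Vfull (D : ArnoldiSV n q) : Matrix (Fin n) (Fin (q+1)) ℂ :=
  D.V.submatrix id Fin.castSucc

/-- `V_{j-1} = [v₁ … v_{j-1}]`. -/
def Vprev (D : ArnoldiSV n q) : Matrix (Fin n) (Fin q) ℂ :=
  D.V.submatrix id fun i : Fin q => (i.castSucc.castSucc : Fin (q+2))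

end ArnoldiSV

/-!
Orthonormality of the Arnoldi basis turns `x_j = x_{j-1} + V_j y_s` into
`y_s = y_j - [y_{j-1}; 0]`, and by the Hessenberg structure the padded vector is the residual
`β e₁ - H̄_j [y_{j-1}; 0]`; so (i) is the GMRES least-squares problem for `y_j` with its
unknown shifted by `[y_{j-1}; 0]`. Part (ii) holds for any matrix `M` and its Moore–Penrose
pseudoinverse `P`: `P w` solves the normal equations, and any other least-squares solution `y`
has `P w = (P M) y`, the orthogonal projection of `y` onto the row space of `M`.
-/

section LeastSquares

variable {a b : Type*} [Fintype a] [Fintype b]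

lemma vnSq_nonneg (v : a → ℂ) : 0 ≤ vnSq v :=
  Finset.sum_nonneg fun i _ => Complex.normSq_nonneg (v i)

lemma eq_zero_of_vnSq_eq_zero {v : a → ℂ} (h : vnSq v = 0) : v = 0 := by
  funext i
  exact Complex.normSq_eq_zero.mp <| (Finset.sum_eq_zero_iff_of_nonneg
    fun i _ => Complex.normSq_nonneg (v i)).mp h i (Finset.mem_univ i)

lemma vnSq_add_of_dotProduct_eq_zero {u v : a → ℂ} (h : star v ⬝ᵥ u = 0) :
    vnSq (u + v) = vnSq u + vnSq v := by
  have hre : ∑ i, (u i * starRingEnd ℂ (v i)).re = 0 := by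
    simpa [dotProduct, Complex.re_sum, mul_comm] using congrArg Complex.re h
  simp only [vnSq, Pi.add_apply, Complex.normSq_add, Finset.sum_add_distrib]
  rw [← Finset.mul_sum, hre]
  ring

lemma dotProduct_mulVec_eq_zero {M : Matrix a b ℂ} {u : a → ℂ} (h : Mᴴ *ᵥ u = 0) (z : b → ℂ) :
    star (M *ᵥ z) ⬝ᵥ u = 0 := by
  rw [star_mulVec, ← dotProduct_mulVec, h, dotProduct_zero]

lemma vnSq_sub_mulVec_of_normal_eq {M : Matrix a b ℂ} {w : a → ℂ} {z : b → ℂ}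
    (hz : Mᴴ *ᵥ (w - M *ᵥ z) = 0) (y : b → ℂ) :
    vnSq (w - M *ᵥ y) = vnSq (w - M *ᵥ z) + vnSq (M *ᵥ (z - y)) := by
  rw [← vnSq_add_of_dotProduct_eq_zero (dotProduct_mulVec_eq_zero hz _), mulVec_sub]
  abel_nf

lemma vnSq_mulVec_le_of_idempotent {Q : Matrix b b ℂ} (hQ : IsIdempotentElem Q)
    (hQh : Q.IsHermitian) (y : b → ℂ) : vnSq (Q *ᵥ y) ≤ vnSq y := by
  have horth : Qᴴ *ᵥ (y - Q *ᵥ y) = 0 := by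
    rw [hQh.eq, mulVec_sub, mulVec_mulVec, hQ.eq, sub_self]
  calc vnSq (Q *ᵥ y) ≤ vnSq (y - Q *ᵥ y) + vnSq (Q *ᵥ y) :=
        le_add_of_nonneg_left (vnSq_nonneg _)
    _ = vnSq y := by
      rw [← vnSq_add_of_dotProduct_eq_zero (dotProduct_mulVec_eq_zero horth _), sub_add_cancel]

lemma IsUniqueVecMin.sub_mulVec {M : Matrix a b ℂ} {t : a → ℂ} {y : b → ℂ}
    (h : IsUniqueVecMin M t y) (p : b → ℂ) : IsUniqueVecMin M (t - M *ᵥ p) (y - p) := by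
  have hshift : ∀ y', t - M *ᵥ p - M *ᵥ y' = t - M *ᵥ (p + y') := fun y' => by
    rw [mulVec_add, sub_sub]
  refine ⟨fun y' => ?_, fun y' hy' => ?_⟩
  · simpa only [hshift, add_sub_cancel] using h.1 (p + y')
  · have hmin : ∀ y'', vnSq (t - M *ᵥ (p + y')) ≤ vnSq (t - M *ᵥ y'') := fun y'' => by
      simpa only [hshift, add_sub_cancel] using hy' (y'' - p)
    rw [← h.2 _ hmin, add_sub_cancel_left]

namespace IsMoorePenrose

variable {M : Matrix a b ℂ} {P : Matrix b a ℂ}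

lemma conjTranspose_mulVec_residual (hP : IsMoorePenrose M P) (w : a → ℂ) :
    Mᴴ *ᵥ (w - M *ᵥ (P *ᵥ w)) = 0 := by
  obtain ⟨h1, -, h3, -⟩ := hP
  have hMMP : Mᴴ * (M * P) = Mᴴ := by
    rw [← h3, ← conjTranspose_mul, h1]
  rw [mulVec_sub, mulVec_mulVec, mulVec_mulVec, Matrix.mul_assoc, hMMP, sub_self]

lemma vnSq_residual_le (hP : IsMoorePenrose M P) (w : a → ℂ) (y : b → ℂ) :
    vnSq (w - M *ᵥ (P *ᵥ w)) ≤ vnSq (w - M *ᵥ y) := by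
  rw [vnSq_sub_mulVec_of_normal_eq (hP.conjTranspose_mulVec_residual w) y]
  exact le_add_of_nonneg_right (vnSq_nonneg _)

lemma vnSq_le_of_mulVec_eq (hP : IsMoorePenrose M P) {w : a → ℂ} {y : b → ℂ}
    (hy : M *ᵥ y = M *ᵥ (P *ᵥ w)) : vnSq (P *ᵥ w) ≤ vnSq y := by
  obtain ⟨-, h2, -, h4⟩ := hP
  have hPw : P *ᵥ w = (P * M) *ᵥ y := by
    rw [← mulVec_mulVec, hy, mulVec_mulVec, mulVec_mulVec, h2]
  have hidem : IsIdempotentElem (P * M) := by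
    rw [IsIdempotentElem, ← Matrix.mul_assoc, h2]
  rw [hPw]
  exact vnSq_mulVec_le_of_idempotent hidem h4 y

lemma vnSq_le_of_vnSq_residual_eq (hP : IsMoorePenrose M P) {w : a → ℂ} {y : b → ℂ}
    (hy : vnSq (w - M *ᵥ y) = vnSq (w - M *ᵥ (P *ᵥ w))) : vnSq (P *ᵥ w) ≤ vnSq y := by
  have hzero : vnSq (M *ᵥ (P *ᵥ w - y)) = 0 := by
    have := vnSq_sub_mulVec_of_normal_eq (hP.conjTranspose_mulVec_residual w) y
    linarith
  refine hP.vnSq_le_of_mulVec_eq (sub_eq_zero.mp ?_).symm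
  rw [← mulVec_sub]
  exact eq_zero_of_vnSq_eq_zero hzero

end IsMoorePenrose

end LeastSquares

namespace ArnoldiSV

variable {n q : ℕ} (D : ArnoldiSV n q)

lemma Vfull_conjTranspose_mul_self : D.Vfullᴴ * D.Vfull = 1 := by
  ext i k
  have h := congrFun (congrFun D.orth i.castSucc) k.castSucc
  simp only [Matrix.mul_apply, conjTranspose_apply, Matrix.one_apply, Vfull,
    submatrix_apply, id, Fin.castSucc_inj] at h ⊢
  exact h

lemma Vfull_mulVec_injective : Function.Injective (D.Vfull *ᵥ ·) := fun u v h => by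
  simpa [mulVec_mulVec, D.Vfull_conjTranspose_mul_self] using congrArg (D.Vfullᴴ *ᵥ ·) h

lemma Vfull_mulVec_snoc_zero (y : Fin q → ℂ) :
    D.Vfull *ᵥ Fin.snoc y 0 = D.Vprev *ᵥ y := by
  funext r
  simp [mulVec, dotProduct, Vfull, Vprev, Fin.sum_univ_castSucc]

lemma padded_residual_eq (y : Fin q → ℂ) :
    (fun (r : Fin (q+2)) => if h : (r : ℕ) < q + 1 then
        (D.beta • e1 q - D.Hprev *ᵥ y) ⟨r, h⟩ else 0)
      = D.beta • e1 (q+1) - D.Hbar *ᵥ Fin.snoc y 0 := by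
  funext r
  induction r using Fin.lastCases with
  | last =>
    have hz : ∀ c : Fin q, D.Hbar (Fin.last (q+1)) c.castSucc = 0 := fun c =>
      D.hess _ _ (by simp only [Fin.val_last, Fin.val_castSucc]; omega)
    simp [mulVec, dotProduct, Fin.sum_univ_castSucc, hz, e1, Fin.ext_iff]
  | cast s =>
    simp [mulVec, dotProduct, Fin.sum_univ_castSucc, Hprev, e1, Nat.lt_succ_iff.mp s.is_lt]

end ArnoldiSV

theorem stmt2_general {n q : ℕ} (D : ArnoldiSV n (q+1))
    (yj : Fin (q+2) → ℂ) (hyj : IsUniqueVecMin D.Hbar (D.beta • e1 (q+2)) yj)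
    (yprev : Fin (q+1) → ℂ)
    (P : Matrix (Fin (q+2)) (Fin (q+2)) ℂ) (hP : IsMoorePenrose D.Hsq P)
    (ysG : Fin (q+2) → ℂ)
    (hysG : D.x0 + D.Vfull *ᵥ yj = (D.x0 + D.Vprev *ᵥ yprev) + D.Vfull *ᵥ ysG) :
    -- (i) `y_{s_j}^(G)` is the unique minimizer of the padded least-squares problem
    (∀ T : Fin (q+3) → ℂ,
      T = (fun (r : Fin (q+3)) => if h : (r : ℕ) < q + 2 then
             (D.beta • e1 (q+1) - D.Hprev *ᵥ yprev) ⟨r, h⟩ else 0) →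
      (∀ y : Fin (q+2) → ℂ, vnSq (T - D.Hbar *ᵥ ysG) ≤ vnSq (T - D.Hbar *ᵥ y)) ∧
      (∀ y : Fin (q+2) → ℂ,
        (∀ y', vnSq (T - D.Hbar *ᵥ y) ≤ vnSq (T - D.Hbar *ᵥ y')) → y = ysG)) ∧
    -- (ii) `ỹ_{s_j}^(F)` is a minimizer of the FOM residual-update problem, of
    -- minimum norm among all minimizers
    (∀ w : Fin (q+2) → ℂ, w = D.beta • e1 (q+1) - D.Hprev *ᵥ yprev →
      (∀ y : Fin (q+2) → ℂ,
        vnSq (w - D.Hsq *ᵥ (P *ᵥ w)) ≤ vnSq (w - D.Hsq *ᵥ y)) ∧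
      (∀ y : Fin (q+2) → ℂ,
        vnSq (w - D.Hsq *ᵥ y) = vnSq (w - D.Hsq *ᵥ (P *ᵥ w)) →
        vnSq (P *ᵥ w) ≤ vnSq y)) := by
  have hysG_eq : ysG = yj - Fin.snoc yprev 0 := D.Vfull_mulVec_injective <| by
    change D.Vfull *ᵥ ysG = D.Vfull *ᵥ (yj - Fin.snoc yprev 0)
    rw [mulVec_sub, D.Vfull_mulVec_snoc_zero, eq_sub_iff_add_eq', ← add_right_inj D.x0, hysG]
    exact (add_assoc _ _ _).symm
  refine ⟨fun T hT => ?_, fun w _ => ⟨hP.vnSq_residual_le w, fun y hy => ?_⟩⟩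
  · rw [hT, D.padded_residual_eq, hysG_eq]
    exact hyj.sub_mulVec _
  · exact hP.vnSq_le_of_vnSq_residual_eq hy

/-- (Progressive formulation of the GMRES and generalized FOM
corrections; `j = q + 2 ≥ 2`.)  The GMRES progressive correction `y_{s_j}^(G)`
(defined by `x_j^(G) = x_{j-1}^(G) + V_j y_{s_j}^(G)`) is the unique minimizer of
`‖[β e₁ - H̄_{j-1} y_{j-1}^(G); 0] - H̄_j y‖₂`, and the generalized FOM progressive
correction `ỹ_{s_j}^(F) = H_j† (β e₁ - H̄_{j-1} y_{j-1}^(G))` is a minimizer of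
`‖β e₁ - H̄_{j-1} y_{j-1}^(G) - H_j y‖₂` of smallest 2-norm among all minimizers. -/
theorem stmt2 {n q : ℕ} (D : ArnoldiSV n (q+1))
    (yj : Fin (q+2) → ℂ) (hyj : IsUniqueVecMin D.Hbar (D.beta • e1 (q+2)) yj)
    (yprev : Fin (q+1) → ℂ) (hyprev : IsUniqueVecMin D.Hprev (D.beta • e1 (q+1)) yprev)
    (P : Matrix (Fin (q+2)) (Fin (q+2)) ℂ) (hP : IsMoorePenrose D.Hsq P)
    (ysG : Fin (q+2) → ℂ)
    (hysG : D.x0 + D.Vfull *ᵥ yj = (D.x0 + D.Vprev *ᵥ yprev) + D.Vfull *ᵥ ysG) :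
    -- (i) `y_{s_j}^(G)` is the unique minimizer of the padded least-squares problem
    (∀ T : Fin (q+3) → ℂ,
      T = (fun (r : Fin (q+3)) => if h : (r : ℕ) < q + 2 then
             (D.beta • e1 (q+1) - D.Hprev *ᵥ yprev) ⟨r, h⟩ else 0) →
      (∀ y : Fin (q+2) → ℂ, vnSq (T - D.Hbar *ᵥ ysG) ≤ vnSq (T - D.Hbar *ᵥ y)) ∧
      (∀ y : Fin (q+2) → ℂ,
        (∀ y', vnSq (T - D.Hbar *ᵥ y) ≤ vnSq (T - D.Hbar *ᵥ y')) → y = ysG)) ∧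
    -- (ii) `ỹ_{s_j}^(F)` is a minimizer of the FOM residual-update problem, of
    -- minimum norm among all minimizers
    (∀ w : Fin (q+2) → ℂ, w = D.beta • e1 (q+1) - D.Hprev *ᵥ yprev →
      (∀ y : Fin (q+2) → ℂ,
        vnSq (w - D.Hsq *ᵥ (P *ᵥ w)) ≤ vnSq (w - D.Hsq *ᵥ y)) ∧
      (∀ y : Fin (q+2) → ℂ,
        vnSq (w - D.Hsq *ᵥ y) = vnSq (w - D.Hsq *ᵥ (P *ᵥ w)) →
        vnSq (P *ᵥ w) ≤ vnSq y)) :=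
  stmt2_general D yj hyj yprev P hP ysG hysG

end
end

section
/- Assume the block setup and QR setup, and let N̂_j† denote the Moore–Penrose pseudoinverse of N̂_j. Set Y_{S_j}^{(G)} := [−R_{j−1}^{−1} Z_j N_j^{−1} C_j; N_j^{−1} C_j] ∈ ℂ^{jL×L} and Ỹ_{S_j}^{(F)} := [−R_{j−1}^{−1} Z_j N̂_j† Ĉ_j; N̂_j† Ĉ_j] ∈ ℂ^{jL×L}. Then: (i) X_j^{(G)} = X_{j−1}^{(G)} + W_j Y_{S_j}^{(G)}; (ii) Y_{S_j}^{(G)} is the unique minimizer over Y ∈ ℂ^{jL×L} of ‖[E_L^{[jL]} S₀ − H̄_{j−1} Y_{j−1}^{(G)}; 0_{L×L}] − H̄_j Y‖_F; (iii) Ỹ_{S_j}^{(F)} is a minimizer over Y ∈ ℂ^{jL×L} of ‖E_L^{[jL]} S₀ − H̄_{j−1} Y_{j−1}^{(G)} − H_j Y‖_F. -/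
open Matrix

noncomputable section

set_option maxHeartbeats 1000000

/-- Squared Frobenius norm of a complex matrix. -/
def frobSq {a b : Type*} [Fintype a] [Fintype b] (M : Matrix a b ℂ) : ℝ :=
  ∑ r, ∑ c, Complex.normSq (M r c)

/-- The block Krylov subspace `𝕂_i(A, F)`: the span of all columns of
`F, A F, …, A^(i-1) F`. -/
def blockKrylov {n L : ℕ} (A : Matrix (Fin n) (Fin n) ℂ)
    (F : Matrix (Fin n) (Fin L) ℂ) (i : ℕ) : Submodule ℂ (Fin n → ℂ) :=
  Submodule.span ℂ { v | ∃ k < i, ∃ c : Fin L, v = fun r => (A ^ k * F) r c }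

/-- `E_L^{[mL]}` : the first `L` columns of the `mL × mL` identity matrix
(block row indexing). -/
def EL (m L : ℕ) : Matrix (Fin m × Fin L) (Fin L) ℂ :=
  Matrix.of fun r c => if (r.1 : ℕ) = 0 ∧ r.2 = c then 1 else 0

/-- An `L × L` matrix is upper triangular. -/
def utL {L : ℕ} (M : Matrix (Fin L) (Fin L) ℂ) : Prop :=
  ∀ a b : Fin L, (b : ℕ) < (a : ℕ) → M a b = 0

/-- A block-indexed `mL × mL` matrix is upper triangular. -/
def utBig {m L : ℕ} (M : Matrix (Fin m × Fin L) (Fin m × Fin L) ℂ) : Prop :=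
  ∀ r c : Fin m × Fin L, (c.1 : ℕ) * L + (c.2 : ℕ) < (r.1 : ℕ) * L + (r.2 : ℕ) → M r c = 0

/-- Stack a block-tall matrix on top of an extra block row. -/
def vcat {m L : ℕ} {col : Type*} (T : Matrix (Fin m × Fin L) col ℂ)
    (Bo : Matrix (Fin L) col ℂ) : Matrix (Fin (m+1) × Fin L) col ℂ :=
  Matrix.of fun r cc => if h : (r.1 : ℕ) < m then T (⟨r.1, h⟩, r.2) cc else Bo r.2 cc

/-- The block matrix `[[R, Z], [0, N]]`. -/
def twoBlock {m L : ℕ} (R : Matrix (Fin m × Fin L) (Fin m × Fin L) ℂ)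
    (Z : Matrix (Fin m × Fin L) (Fin L) ℂ) (N : Matrix (Fin L) (Fin L) ℂ) :
    Matrix (Fin (m+1) × Fin L) (Fin (m+1) × Fin L) ℂ :=
  Matrix.of fun r c =>
    if hr : (r.1 : ℕ) < m then
      if hc : (c.1 : ℕ) < m then R (⟨r.1, hr⟩, r.2) (⟨c.1, hc⟩, c.2)
      else Z (⟨r.1, hr⟩, r.2) c.2
    else
      if (c.1 : ℕ) < m then 0 else N r.2 c.2

/-- The block matrix `[[R, Z], [0, Hmid], [0, Hbot]]`. -/
def threeBlock {m L : ℕ} (R : Matrix (Fin m × Fin L) (Fin m × Fin L) ℂ)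
    (Z : Matrix (Fin m × Fin L) (Fin L) ℂ) (Hmid Hbot : Matrix (Fin L) (Fin L) ℂ) :
    Matrix (Fin (m+2) × Fin L) (Fin (m+1) × Fin L) ℂ :=
  Matrix.of fun r c =>
    if hr : (r.1 : ℕ) < m then
      if hc : (c.1 : ℕ) < m then R (⟨r.1, hr⟩, r.2) (⟨c.1, hc⟩, c.2)
      else Z (⟨r.1, hr⟩, r.2) c.2
    else
      if (c.1 : ℕ) < m then 0
      else if (r.1 : ℕ) = m then Hmid r.2 c.2 else Hbot r.2 c.2

/-- `diag(Q, I_L)` : extend a block-indexed square matrix by an identity block. -/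
def extendOne {m L : ℕ} (Q : Matrix (Fin m × Fin L) (Fin m × Fin L) ℂ) :
    Matrix (Fin (m+1) × Fin L) (Fin (m+1) × Fin L) ℂ :=
  Matrix.of fun r c =>
    if hr : (r.1 : ℕ) < m then
      if hc : (c.1 : ℕ) < m then Q (⟨r.1, hr⟩, r.2) (⟨c.1, hc⟩, c.2) else 0
    else
      if (c.1 : ℕ) < m then 0 else if r.2 = c.2 then 1 else 0

/-- `diag(I_{mL}, Q)` : an identity block, then `Q` in the bottom right corner. -/
def extendBot {m L : ℕ} (Q : Matrix (Fin L) (Fin L) ℂ) :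
    Matrix (Fin (m+1) × Fin L) (Fin (m+1) × Fin L) ℂ :=
  Matrix.of fun r c =>
    if (r.1 : ℕ) < m ∨ (c.1 : ℕ) < m then (if r = c then 1 else 0)
    else Q r.2 c.2

/-- The `(m+2)L × (m+2)L` matrix which is the identity outside of its trailing
principal `2L × 2L` block, which is `[[Q11, Q12], [Q21, Q22]]`. -/
def trailingTwo {m L : ℕ} (Q11 Q12 Q21 Q22 : Matrix (Fin L) (Fin L) ℂ) :
    Matrix (Fin (m+2) × Fin L) (Fin (m+2) × Fin L) ℂ :=
  Matrix.of fun r c =>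
    if (r.1 : ℕ) < m ∨ (c.1 : ℕ) < m then (if r = c then 1 else 0)
    else if (r.1 : ℕ) = m then
      (if (c.1 : ℕ) = m then Q11 r.2 c.2 else Q12 r.2 c.2)
    else
      (if (c.1 : ℕ) = m then Q21 r.2 c.2 else Q22 r.2 c.2)

/-- The block matrix `[R ; 0]` (one extra zero block row below `R`). -/
def stackZero {m L : ℕ} (R : Matrix (Fin m × Fin L) (Fin m × Fin L) ℂ) :
    Matrix (Fin (m+1) × Fin L) (Fin m × Fin L) ℂ :=
  Matrix.of fun r c => if h : (r.1 : ℕ) < m then R (⟨r.1, h⟩, r.2) c else 0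

/-- A breakdown-free block Arnoldi decomposition of length `j = p + 1` for the block
linear system `A X = B` with initial guess `X₀` (block size `L`). -/
structure BlockArnoldi (n L p : ℕ) : Type where
  A : Matrix (Fin n) (Fin n) ℂ
  B : Matrix (Fin n) (Fin L) ℂ
  X0 : Matrix (Fin n) (Fin L) ℂ
  W : Matrix (Fin n) (Fin (p+2) × Fin L) ℂ
  S0 : Matrix (Fin L) (Fin L) ℂ
  Hbar : Matrix (Fin (p+2) × Fin L) (Fin (p+1) × Fin L) ℂ
  hL : 1 ≤ L
  hn : (p+2) * L ≤ n
  F0_rank : (B - A * X0).rank = L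
  orth : Wᴴ * W = 1
  S0_ut : utL S0
  S0_inv : IsUnit S0
  F0_eq : B - A * X0 = (W.submatrix id fun c : Fin L => ((0 : Fin (p+2)), c)) * S0
  span : ∀ i : ℕ, i ≤ p + 2 →
    blockKrylov A (B - A * X0) i =
      Submodule.span ℂ { v | ∃ c : Fin (p+2) × Fin L, (c.1 : ℕ) < i ∧ v = fun r => W r c }
  arnoldi : A * W.submatrix id (Prod.map Fin.castSucc id) = W * Hbar
  hess : ∀ r c, (c.1 : ℕ) + 1 < (r.1 : ℕ) → Hbar r c = 0
  sub_ut : ∀ (k : Fin (p+1)) (a b : Fin L), (b : ℕ) < (a : ℕ) → Hbar (k.succ, a) (k, b) = 0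
  sub_inv : ∀ k : Fin (p+1), IsUnit (Matrix.of fun a b : Fin L => Hbar (k.succ, a) (k, b))

namespace BlockArnoldi

variable {n L p : ℕ}

/-- `H̄_{j-1}`, the leading `jL × (j-1)L` submatrix of `H̄_j`. -/
def Hprev (D : BlockArnoldi n L p) : Matrix (Fin (p+1) × Fin L) (Fin p × Fin L) ℂ :=
  D.Hbar.submatrix (Prod.map Fin.castSucc id) (Prod.map Fin.castSucc id)

/-- `H_j`, the leading `jL × jL` submatrix of `H̄_j`. -/
def Hsq (D : BlockArnoldi n L p) : Matrix (Fin (p+1) × Fin L) (Fin (p+1) × Fin L) ℂ :=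
  D.Hbar.submatrix (Prod.map Fin.castSucc id) id

/-- `W_j = [V₁ … V_j]`. -/
def Wfull (D : BlockArnoldi n L p) : Matrix (Fin n) (Fin (p+1) × Fin L) ℂ :=
  D.W.submatrix id (Prod.map Fin.castSucc id)

/-- `W_{j-1} = [V₁ … V_{j-1}]`. -/
def Wprev (D : BlockArnoldi n L p) : Matrix (Fin n) (Fin p × Fin L) ℂ :=
  D.W.submatrix id (Prod.map (fun i : Fin p => (i.castSucc.castSucc : Fin (p+2))) id)

/-- `V_j`, the `j`-th block Arnoldi vector. -/
def Vj (D : BlockArnoldi n L p) : Matrix (Fin n) (Fin L) ℂ :=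
  D.W.submatrix id fun c : Fin L => (((Fin.last p).castSucc : Fin (p+2)), c)

end BlockArnoldi

/-- `Y` is the unique minimizer of `‖Hb • Y' - T‖_F` over all `Y'`. -/
def IsUniqueFrobMin {a b c : Type*} [Fintype a] [Fintype b] [Fintype c]
    (Hb : Matrix a b ℂ) (T : Matrix a c ℂ) (Y : Matrix b c ℂ) : Prop :=
  (∀ Y', frobSq (Hb * Y - T) ≤ frobSq (Hb * Y' - T)) ∧
  ∀ Y', (∀ Y'', frobSq (Hb * Y' - T) ≤ frobSq (Hb * Y'' - T)) → Y' = Y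

/-- `Y_j^{(G)}` is the solution of the `j`-th block GMRES least-squares subproblem. -/
def IsBlockGMRESj {n L p : ℕ} (D : BlockArnoldi n L p)
    (Y : Matrix (Fin (p+1) × Fin L) (Fin L) ℂ) : Prop :=
  IsUniqueFrobMin D.Hbar (EL (p+2) L * D.S0) Y

/-- `Y_{j-1}^{(G)}` is the solution of the `(j-1)`-st block GMRES least-squares
subproblem. -/
def IsBlockGMRESprev {n L p : ℕ} (D : BlockArnoldi n L p)
    (Y : Matrix (Fin p × Fin L) (Fin L) ℂ) : Prop :=
  IsUniqueFrobMin D.Hprev (EL (p+1) L * D.S0) Y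

/-- The QR setup at step `j = p+1` : a QR factorization `Q̄_{j-1} H̄_{j-1} = [R_{j-1}; 0]`
from the previous step, the induced splitting
`diag(Q̄_{j-1}, I_L)·H̄_j = [[R,Z],[0,Ĥ_{jj}],[0,H_{j+1,j}]]`, the unitary `Q_j`
(identity outside its trailing principal `2L×2L` block) completing the
QR factorization of `H̄_j`, and the unitary `Q̂_j^{(b)}` triangularizing `Ĥ_{jj}`. -/
structure QRSetup (L p : ℕ) (Hbar : Matrix (Fin (p+2) × Fin L) (Fin (p+1) × Fin L) ℂ)
    (S0 : Matrix (Fin L) (Fin L) ℂ) : Type where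
  Qbar : Matrix (Fin (p+1) × Fin L) (Fin (p+1) × Fin L) ℂ
  R : Matrix (Fin p × Fin L) (Fin p × Fin L) ℂ
  Z : Matrix (Fin p × Fin L) (Fin L) ℂ
  Hhat : Matrix (Fin L) (Fin L) ℂ
  Hsub : Matrix (Fin L) (Fin L) ℂ
  Q11 : Matrix (Fin L) (Fin L) ℂ
  Q12 : Matrix (Fin L) (Fin L) ℂ
  Q21 : Matrix (Fin L) (Fin L) ℂ
  Q22 : Matrix (Fin L) (Fin L) ℂ
  N : Matrix (Fin L) (Fin L) ℂ
  Qhatb : Matrix (Fin L) (Fin L) ℂ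
  Nhat : Matrix (Fin L) (Fin L) ℂ
  Qbar_unit : Qbarᴴ * Qbar = 1
  Qbar_base : p = 0 → Qbar = 1
  R_ut : utBig R
  R_inv : IsUnit R
  qr_prev : Qbar * Hbar.submatrix (Prod.map Fin.castSucc id) (Prod.map Fin.castSucc id)
      = stackZero R
  qr_split : extendOne Qbar * Hbar = threeBlock R Z Hhat Hsub
  Qj_unit : (trailingTwo (m := p) Q11 Q12 Q21 Q22)ᴴ * trailingTwo (m := p) Q11 Q12 Q21 Q22 = 1
  qr_full : trailingTwo (m := p) Q11 Q12 Q21 Q22 * (extendOne Qbar * Hbar)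
      = threeBlock R Z N 0
  N_ut : utL N
  N_inv : IsUnit N
  Qhatb_unit : Qhatbᴴ * Qhatb = 1
  Nhat_def : Nhat = Qhatb * Hhat
  Nhat_ut : utL Nhat

namespace QRSetup

variable {L p : ℕ} {Hbar : Matrix (Fin (p+2) × Fin L) (Fin (p+1) × Fin L) ℂ}
  {S0 : Matrix (Fin L) (Fin L) ℂ}

/-- `C̃_j` : the last `L` rows of `Q̄_{j-1} E_L^{[jL]} S₀`. -/
def Ct (S : QRSetup L p Hbar S0) : Matrix (Fin L) (Fin L) ℂ :=
  Matrix.of fun a b => (S.Qbar * (EL (p+1) L * S0)) ((Fin.last p), a) b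

/-- `C_j := Q_j^{(11)} C̃_j`. -/
def C (S : QRSetup L p Hbar S0) : Matrix (Fin L) (Fin L) ℂ := S.Q11 * S.Ct

/-- `Ĉ_j := Q̂_j^{(b)} C̃_j`. -/
def Chat (S : QRSetup L p Hbar S0) : Matrix (Fin L) (Fin L) ℂ := S.Qhatb * S.Ct

end QRSetup

/-! Unitary factors do not change the Frobenius norm, so every residual can be read off after
multiplying by `Q̄_{j-1}`, `diag(Q̄_{j-1}, I_L)`, `Q_j` or `Q̂_j^{(b)}`. Since
`Q̄_{j-1} H̄_{j-1} = [R_{j-1}; 0]`, uniqueness of `Y_{j-1}^{(G)}` forces `R_{j-1} Y_{j-1}^{(G)}` to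
be the top part of `Q̄_{j-1} E_L S₀`. The `j`-th GMRES residual is then, up to a constant,
`‖[R_{j-1}, Z_j; 0, N_j] Y - [R_{j-1} Y_{j-1}^{(G)}; C_j]‖²`, and block back substitution solves
this triangular system exactly by `[Y_{j-1}^{(G)}; 0] + Y_{S_j}^{(G)}`. This is `Y_j^{(G)}`, which
gives (i); (ii) is the same least-squares problem shifted by `[Y_{j-1}^{(G)}; 0]`. In (iii) the
residual of `Y = [Y₁; Y₂]` is `‖R_{j-1} Y₁ + Z_j Y₂‖² + ‖Ĉ_j - N̂_j Y₂‖²`: `Ỹ_{S_j}^{(F)}` makes the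
first term vanish, and `N̂_j† Ĉ_j` minimises the second because `N̂_j N̂_j†` is the orthogonal
projection onto the range of `N̂_j`. -/

section Frobenius

variable {a a' b c : Type*} [Fintype a] [Fintype a'] [Fintype b] [Fintype c]

lemma frobSq_nonneg (M : Matrix a b ℂ) : 0 ≤ frobSq M :=
  Finset.sum_nonneg fun _ _ => Finset.sum_nonneg fun _ _ => Complex.normSq_nonneg _

lemma frobSq_zero : frobSq (0 : Matrix a b ℂ) = 0 := by
  simp [frobSq]

lemma frobSq_neg (M : Matrix a b ℂ) : frobSq (-M) = frobSq M := by
  simp [frobSq]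

lemma frobSq_sub_comm (M N : Matrix a b ℂ) : frobSq (M - N) = frobSq (N - M) := by
  rw [← frobSq_neg, neg_sub]

lemma frobSq_eq_re_trace (M : Matrix a b ℂ) : frobSq M = (Mᴴ * M).trace.re := by
  simp only [frobSq, trace, diag_apply, mul_apply, conjTranspose_apply, Complex.re_sum]
  rw [Finset.sum_comm]
  refine Finset.sum_congr rfl fun _ _ => Finset.sum_congr rfl fun _ _ => ?_
  simp [Complex.normSq_apply, Complex.mul_re]

lemma frobSq_unitary_mul [DecidableEq b] {U : Matrix a b ℂ} (hU : Uᴴ * U = 1)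
    (M : Matrix b c ℂ) : frobSq (U * M) = frobSq M := by
  rw [frobSq_eq_re_trace, frobSq_eq_re_trace, conjTranspose_mul, Matrix.mul_assoc,
    ← Matrix.mul_assoc Uᴴ, hU, Matrix.one_mul]

lemma frobSq_add_of_trace_eq_zero {M N : Matrix a b ℂ} (h : (Mᴴ * N).trace = 0) :
    frobSq (M + N) = frobSq M + frobSq N := by
  have h' : (Nᴴ * M).trace = 0 := by
    rw [← conjTranspose_conjTranspose M, ← conjTranspose_mul, trace_conjTranspose, h, star_zero]
  simp only [frobSq_eq_re_trace, conjTranspose_add, Matrix.add_mul, Matrix.mul_add, trace_add,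
    h, h', Complex.add_re, Complex.zero_re]
  ring

lemma IsMoorePenrose.frobSq_mul_sub_le {M : Matrix a b ℂ} {P : Matrix b a ℂ}
    (hP : IsMoorePenrose M P) (C : Matrix a c ℂ) (X : Matrix b c ℂ) :
    frobSq (M * (P * C) - C) ≤ frobSq (M * X - C) := by
  obtain ⟨hMPM, -, hMP, -⟩ := hP
  -- `M * P` is the orthogonal projection onto the range of `M`.
  have hidem : M * P * (M * P) = M * P := by rw [← Matrix.mul_assoc, hMPM]
  have hrange : M * X - M * P * C = M * P * (M * X - M * P * C) := by
    rw [Matrix.mul_sub, ← Matrix.mul_assoc, hMPM, ← Matrix.mul_assoc, hidem]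
  have hperp : ((M * X - M * P * C)ᴴ * (M * P * C - C)).trace = 0 := by
    rw [hrange, conjTranspose_mul, hMP, Matrix.mul_assoc, Matrix.mul_sub, ← Matrix.mul_assoc,
      hidem, sub_self, Matrix.mul_zero, trace_zero]
  have hsplit := frobSq_add_of_trace_eq_zero hperp
  rw [sub_add_sub_cancel] at hsplit
  rw [hsplit, ← Matrix.mul_assoc]
  linarith [frobSq_nonneg (M * X - M * P * C)]

lemma frobSq_mul_sub_le_of_eq_add {H : Matrix a b ℂ} {T : Matrix a c ℂ} {G : Matrix a' b ℂ}
    {T' : Matrix a' c ℂ} {κ : ℝ}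
    (hsplit : ∀ Y : Matrix b c ℂ, frobSq (H * Y - T) = frobSq (G * Y - T') + κ)
    {Y₀ : Matrix b c ℂ} (hY₀ : G * Y₀ = T') (Y : Matrix b c ℂ) :
    frobSq (H * Y₀ - T) ≤ frobSq (H * Y - T) := by
  rw [hsplit, hsplit, hY₀, sub_self, frobSq_zero]
  linarith [frobSq_nonneg (G * Y - T')]

/-- The binders of `IsUniqueFrobMin` elaborate at the type synonym `CStarMatrix`; this restates
it at `Matrix`, so that rewriting works. -/
lemma isUniqueFrobMin_iff {H : Matrix a b ℂ} {T : Matrix a c ℂ} {Y : Matrix b c ℂ} :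
    IsUniqueFrobMin H T Y ↔ (∀ Y' : Matrix b c ℂ, frobSq (H * Y - T) ≤ frobSq (H * Y' - T)) ∧
      ∀ Y' : Matrix b c ℂ, (∀ Y'' : Matrix b c ℂ, frobSq (H * Y' - T) ≤ frobSq (H * Y'' - T)) →
        Y' = Y :=
  Iff.rfl

lemma IsUniqueFrobMin.sub_mul {H : Matrix a b ℂ} {T : Matrix a c ℂ} {Y : Matrix b c ℂ}
    (h : IsUniqueFrobMin H T Y) (Y₀ : Matrix b c ℂ) :
    IsUniqueFrobMin H (T - H * Y₀) (Y - Y₀) := by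
  have shift : ∀ Y' : Matrix b c ℂ, H * Y' - (T - H * Y₀) = H * (Y' + Y₀) - T := fun Y' => by
    rw [Matrix.mul_add]; abel
  rw [isUniqueFrobMin_iff] at h ⊢
  refine ⟨fun Y' => ?_, fun Y' hY' => ?_⟩
  · rw [shift, shift, sub_add_cancel]
    exact h.1 _
  · have hmin : ∀ Y'' : Matrix b c ℂ, frobSq (H * (Y' + Y₀) - T) ≤ frobSq (H * Y'' - T) :=
      fun Y'' => by simpa only [shift, sub_add_cancel] using hY' (Y'' - Y₀)
    rw [← h.2 _ hmin, add_sub_cancel_right]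

end Frobenius

section Blocks

variable {m L : ℕ} {col d : Type*}

def blockSnoc (m L : ℕ) : Fin (m+1) × Fin L ≃ (Fin m × Fin L) ⊕ Fin L :=
  (Equiv.prodCongr finSumFinEquiv.symm (Equiv.refl _)).trans
    ((Equiv.sumProdDistrib _ _ _).trans (Equiv.sumCongr (Equiv.refl _) (Equiv.uniqueProd _ _)))

@[simp]
lemma blockSnoc_castSucc (i : Fin m) (a : Fin L) :
    blockSnoc m L (i.castSucc, a) = Sum.inl (i, a) := by
  simp [blockSnoc]

@[simp]
lemma blockSnoc_last (a : Fin L) : blockSnoc m L (Fin.last m, a) = Sum.inr a := by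
  simp [blockSnoc]

def blockSnoc₂ (m L : ℕ) : Fin (m+2) × Fin L ≃ (Fin m × Fin L) ⊕ (Fin L ⊕ Fin L) :=
  (blockSnoc (m+1) L).trans
    ((Equiv.sumCongr (blockSnoc m L) (Equiv.refl _)).trans (Equiv.sumAssoc _ _ _))

def blockInit (M : Matrix (Fin (m+1) × Fin L) col ℂ) : Matrix (Fin m × Fin L) col ℂ :=
  M.submatrix (Prod.map Fin.castSucc id) id

def blockLast (M : Matrix (Fin (m+1) × Fin L) col ℂ) : Matrix (Fin L) col ℂ :=
  M.submatrix (fun a => (Fin.last m, a)) id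

lemma vcat_eq_submatrix_fromRows (T : Matrix (Fin m × Fin L) col ℂ) (B : Matrix (Fin L) col ℂ) :
    vcat T B = (fromRows T B).submatrix (blockSnoc m L) id := by
  ext ⟨r, a⟩ c
  induction r using Fin.lastCases <;> simp [vcat]

lemma vcat_vcat_eq_submatrix_fromRows (T : Matrix (Fin m × Fin L) col ℂ)
    (B₁ B₂ : Matrix (Fin L) col ℂ) :
    vcat (m := m+1) (vcat T B₁) B₂
      = (fromRows T (fromRows B₁ B₂)).submatrix (blockSnoc₂ m L) id := by
  ext ⟨r, a⟩ c
  induction r using Fin.lastCases with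
  | last => simp [vcat, blockSnoc₂]
  | cast r => induction r using Fin.lastCases <;> simp [vcat, blockSnoc₂]

@[simp]
lemma blockInit_vcat (T : Matrix (Fin m × Fin L) col ℂ) (B : Matrix (Fin L) col ℂ) :
    blockInit (vcat T B) = T := by
  ext ⟨i, a⟩ c
  simp [blockInit, vcat]

lemma vcat_blockInit_blockLast (M : Matrix (Fin (m+1) × Fin L) col ℂ) :
    vcat (blockInit M) (blockLast M) = M := by
  ext ⟨r, a⟩ c
  induction r using Fin.lastCases <;> simp [vcat, blockInit, blockLast]

lemma vcat_add (T T' : Matrix (Fin m × Fin L) col ℂ) (B B' : Matrix (Fin L) col ℂ) :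
    vcat T B + vcat T' B' = vcat (T + T') (B + B') := by
  ext ⟨r, a⟩ c
  induction r using Fin.lastCases <;> simp [vcat]

lemma vcat_sub (T T' : Matrix (Fin m × Fin L) col ℂ) (B B' : Matrix (Fin L) col ℂ) :
    vcat T B - vcat T' B' = vcat (T - T') (B - B') := by
  ext ⟨r, a⟩ c
  induction r using Fin.lastCases <;> simp [vcat]

lemma vcat_mul [Fintype col] (T : Matrix (Fin m × Fin L) col ℂ) (B : Matrix (Fin L) col ℂ)
    (M : Matrix col d ℂ) : vcat T B * M = vcat (T * M) (B * M) := by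
  ext ⟨r, a⟩ c
  induction r using Fin.lastCases <;> simp [vcat, mul_apply]

lemma mul_vcat_zero {e : Type*} [Fintype d] (M : Matrix e (Fin (m+1) × Fin L) ℂ)
    (Y : Matrix (Fin m × Fin L) d ℂ) :
    M * vcat Y 0 = M.submatrix id (Prod.map Fin.castSucc id) * Y := by
  ext r c
  simp [vcat, mul_apply, Fintype.sum_prod_type, Fin.sum_univ_castSucc]

lemma frobSq_vcat [Fintype col] (T : Matrix (Fin m × Fin L) col ℂ) (B : Matrix (Fin L) col ℂ) :
    frobSq (vcat T B) = frobSq T + frobSq B := by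
  simp [frobSq, vcat, Fintype.sum_prod_type, Fin.sum_univ_castSucc]

lemma stackZero_eq_vcat (R : Matrix (Fin m × Fin L) (Fin m × Fin L) ℂ) :
    stackZero R = vcat R 0 := rfl

lemma twoBlock_eq_submatrix_fromBlocks (R : Matrix (Fin m × Fin L) (Fin m × Fin L) ℂ)
    (Z : Matrix (Fin m × Fin L) (Fin L) ℂ) (N : Matrix (Fin L) (Fin L) ℂ) :
    twoBlock R Z N = (fromBlocks R Z 0 N).submatrix (blockSnoc m L) (blockSnoc m L) := by
  ext ⟨r, a⟩ ⟨c, b⟩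
  induction r using Fin.lastCases <;> induction c using Fin.lastCases <;> simp [twoBlock]

lemma twoBlock_mul_vcat (R : Matrix (Fin m × Fin L) (Fin m × Fin L) ℂ)
    (Z : Matrix (Fin m × Fin L) (Fin L) ℂ) (N : Matrix (Fin L) (Fin L) ℂ)
    (x : Matrix (Fin m × Fin L) d ℂ) (y : Matrix (Fin L) d ℂ) :
    twoBlock R Z N * vcat x y = vcat (R * x + Z * y) (N * y) := by
  simp [twoBlock_eq_submatrix_fromBlocks, vcat_eq_submatrix_fromRows, fromBlocks_mul_fromRows]

lemma twoBlock_mul_vcat_sub_inv {R : Matrix (Fin m × Fin L) (Fin m × Fin L) ℂ} (hR : IsUnit R)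
    (Z : Matrix (Fin m × Fin L) (Fin L) ℂ) (N : Matrix (Fin L) (Fin L) ℂ)
    (x : Matrix (Fin m × Fin L) d ℂ) (w : Matrix (Fin L) d ℂ) :
    twoBlock R Z N * vcat (x - R⁻¹ * Z * w) w = vcat (R * x) (N * w) := by
  rw [twoBlock_mul_vcat, Matrix.mul_sub, Matrix.mul_assoc,
    mul_nonsing_inv_cancel_left _ _ ((isUnit_iff_isUnit_det R).mp hR), sub_add_cancel]

lemma frobSq_vcat_zero_sub_twoBlock_mul_le
    {R : Matrix (Fin m × Fin L) (Fin m × Fin L) ℂ} (hR : IsUnit R)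
    (Z : Matrix (Fin m × Fin L) (Fin L) ℂ) {H U P : Matrix (Fin L) (Fin L) ℂ}
    (hU : Uᴴ * U = 1) (hP : IsMoorePenrose (U * H) P) (c : Matrix (Fin L) (Fin L) ℂ)
    (Y : Matrix (Fin (m+1) × Fin L) (Fin L) ℂ) :
    frobSq (vcat 0 c - twoBlock R Z H * vcat (-(R⁻¹ * Z * (P * (U * c)))) (P * (U * c)))
      ≤ frobSq (vcat 0 c - twoBlock R Z H * Y) := by
  have hsplit : ∀ (y₁ : Matrix (Fin m × Fin L) (Fin L) ℂ) (y₂ : Matrix (Fin L) (Fin L) ℂ),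
      frobSq (vcat 0 c - twoBlock R Z H * vcat y₁ y₂)
        = frobSq (R * y₁ + Z * y₂) + frobSq (U * H * y₂ - U * c) := fun y₁ y₂ => by
    rw [twoBlock_mul_vcat, vcat_sub, frobSq_vcat, zero_sub, frobSq_neg, frobSq_sub_comm,
      ← frobSq_unitary_mul hU (H * y₂ - c), Matrix.mul_sub, Matrix.mul_assoc]
  have hback : R * -(R⁻¹ * Z * (P * (U * c))) + Z * (P * (U * c)) = 0 := by
    rw [Matrix.mul_neg, Matrix.mul_assoc,
      mul_nonsing_inv_cancel_left _ _ ((isUnit_iff_isUnit_det R).mp hR), neg_add_cancel]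
  rw [← vcat_blockInit_blockLast Y, hsplit, hsplit, hback, frobSq_zero, zero_add]
  linarith [frobSq_nonneg (R * blockInit Y + Z * blockLast Y),
    hP.frobSq_mul_sub_le (U * c) (blockLast Y)]

lemma blockInit_threeBlock (R : Matrix (Fin m × Fin L) (Fin m × Fin L) ℂ)
    (Z : Matrix (Fin m × Fin L) (Fin L) ℂ) (Hm Hb : Matrix (Fin L) (Fin L) ℂ) :
    blockInit (threeBlock R Z Hm Hb) = twoBlock R Z Hm := by
  ext ⟨r, a⟩ ⟨c, b⟩
  induction r using Fin.lastCases <;> simp [blockInit, threeBlock, twoBlock]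

lemma threeBlock_zero (R : Matrix (Fin m × Fin L) (Fin m × Fin L) ℂ)
    (Z : Matrix (Fin m × Fin L) (Fin L) ℂ) (Hm : Matrix (Fin L) (Fin L) ℂ) :
    threeBlock R Z Hm 0 = vcat (twoBlock R Z Hm) 0 := by
  rw [← vcat_blockInit_blockLast (threeBlock R Z Hm 0), blockInit_threeBlock]
  congr
  ext a ⟨c, b⟩
  simp [blockLast, threeBlock]

lemma extendOne_eq_submatrix_fromBlocks (Q : Matrix (Fin m × Fin L) (Fin m × Fin L) ℂ) :
    extendOne Q = (fromBlocks Q 0 0 1).submatrix (blockSnoc m L) (blockSnoc m L) := by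
  ext ⟨r, a⟩ ⟨c, b⟩
  induction r using Fin.lastCases <;> induction c using Fin.lastCases <;>
    simp [extendOne, one_apply]

lemma extendOne_unitary {Q : Matrix (Fin m × Fin L) (Fin m × Fin L) ℂ} (hQ : Qᴴ * Q = 1) :
    (extendOne Q)ᴴ * extendOne Q = 1 := by
  simp [extendOne_eq_submatrix_fromBlocks, conjTranspose_submatrix, fromBlocks_conjTranspose,
    fromBlocks_multiply, hQ]

lemma extendOne_mul_vcat (Q : Matrix (Fin m × Fin L) (Fin m × Fin L) ℂ)
    (x : Matrix (Fin m × Fin L) d ℂ) (y : Matrix (Fin L) d ℂ) :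
    extendOne Q * vcat x y = vcat (Q * x) y := by
  simp [extendOne_eq_submatrix_fromBlocks, vcat_eq_submatrix_fromRows, fromBlocks_mul_fromRows]

lemma trailingTwo_eq_submatrix_fromBlocks (Q11 Q12 Q21 Q22 : Matrix (Fin L) (Fin L) ℂ) :
    trailingTwo (m := m) Q11 Q12 Q21 Q22 =
      (fromBlocks 1 0 0 (fromBlocks Q11 Q12 Q21 Q22)).submatrix (blockSnoc₂ m L)
        (blockSnoc₂ m L) := by
  ext ⟨r, a⟩ ⟨c, b⟩
  induction r using Fin.lastCases <;> try induction ‹Fin (m+1)› using Fin.lastCases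
  all_goals induction c using Fin.lastCases <;> try induction ‹Fin (m+1)› using Fin.lastCases
  all_goals simp [trailingTwo, blockSnoc₂, one_apply, Fin.ext_iff] <;> omega

lemma trailingTwo_mul_vcat_vcat (Q11 Q12 Q21 Q22 : Matrix (Fin L) (Fin L) ℂ)
    (x : Matrix (Fin m × Fin L) d ℂ) (y₁ y₂ : Matrix (Fin L) d ℂ) :
    trailingTwo (m := m) Q11 Q12 Q21 Q22 * vcat (m := m+1) (vcat x y₁) y₂
      = vcat (m := m+1) (vcat x (Q11 * y₁ + Q12 * y₂)) (Q21 * y₁ + Q22 * y₂) := by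
  simp [trailingTwo_eq_submatrix_fromBlocks, vcat_vcat_eq_submatrix_fromRows,
    fromBlocks_mul_fromRows]

lemma EL_succ_mul (hm : 0 < m) (S : Matrix (Fin L) (Fin L) ℂ) :
    EL (m+1) L * S = vcat (EL m L * S) 0 := by
  ext ⟨r, a⟩ c
  induction r using Fin.lastCases with
  | last => simp [vcat, EL, mul_apply, hm.ne']
  | cast r => simp [vcat, EL, mul_apply]

end Blocks

namespace BlockArnoldi

variable {n L p : ℕ} (D : BlockArnoldi n L p)

lemma Hbar_mul_vcat_zero (Y : Matrix (Fin p × Fin L) (Fin L) ℂ) :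
    D.Hbar * vcat Y 0 = vcat (D.Hprev * Y) 0 := by
  have hcols : D.Hbar.submatrix id (Prod.map Fin.castSucc id) = vcat D.Hprev 0 := by
    ext ⟨r, a⟩ ⟨c, b⟩
    induction r using Fin.lastCases with
    | last => simpa [vcat] using D.hess (Fin.last (p+1), a) (c.castSucc, b) (by simp)
    | cast r => rw [vcat, of_apply, dif_pos (by simpa using r.is_le)]; rfl
  rw [mul_vcat_zero, hcols, vcat_mul, Matrix.zero_mul]

lemma Wfull_mul_vcat_zero (Y : Matrix (Fin p × Fin L) (Fin L) ℂ) :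
    D.Wfull * vcat Y 0 = D.Wprev * Y :=
  mul_vcat_zero _ Y

end BlockArnoldi

namespace QRSetup

variable {L p : ℕ} {Hbar : Matrix (Fin (p+2) × Fin L) (Fin (p+1) × Fin L) ℂ}
  {S0 : Matrix (Fin L) (Fin L) ℂ} (S : QRSetup L p Hbar S0)

lemma qbar_mul_EL_eq_vcat {Yprev : Matrix (Fin p × Fin L) (Fin L) ℂ}
    (hY : IsUniqueFrobMin (Hbar.submatrix (Prod.map Fin.castSucc id) (Prod.map Fin.castSucc id))
      (EL (p+1) L * S0) Yprev) :
    S.Qbar * (EL (p+1) L * S0) = vcat (S.R * Yprev) S.Ct := by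
  set c := blockInit (S.Qbar * (EL (p+1) L * S0))
  have hE : S.Qbar * (EL (p+1) L * S0) = vcat c S.Ct := (vcat_blockInit_blockLast _).symm
  have hsplit : ∀ Y : Matrix (Fin p × Fin L) (Fin L) ℂ,
      frobSq (Hbar.submatrix (Prod.map Fin.castSucc id) (Prod.map Fin.castSucc id) * Y
        - EL (p+1) L * S0) = frobSq (S.R * Y - c) + frobSq S.Ct := fun Y => by
    rw [← frobSq_unitary_mul S.Qbar_unit, Matrix.mul_sub, ← Matrix.mul_assoc, S.qr_prev,
      stackZero_eq_vcat, vcat_mul, hE, vcat_sub, frobSq_vcat, Matrix.zero_mul, zero_sub,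
      frobSq_neg]
  have hRc : S.R * (S.R⁻¹ * c) = c :=
    mul_nonsing_inv_cancel_left _ _ ((isUnit_iff_isUnit_det _).mp S.R_inv)
  rw [hE, ← (isUniqueFrobMin_iff.mp hY).2 _ (frobSq_mul_sub_le_of_eq_add hsplit hRc), hRc]

lemma frobSq_Hbar_mul_sub {c : Matrix (Fin p × Fin L) (Fin L) ℂ}
    (hE : S.Qbar * (EL (p+1) L * S0) = vcat c S.Ct) (Y : Matrix (Fin (p+1) × Fin L) (Fin L) ℂ) :
    frobSq (Hbar * Y - EL (p+2) L * S0)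
      = frobSq (twoBlock S.R S.Z S.N * Y - vcat c S.C) + frobSq (S.Q21 * S.Ct) := by
  rw [← frobSq_unitary_mul (extendOne_unitary S.Qbar_unit), ← frobSq_unitary_mul S.Qj_unit,
    Matrix.mul_sub, Matrix.mul_sub, ← Matrix.mul_assoc _ Hbar, ← Matrix.mul_assoc, S.qr_full,
    threeBlock_zero, vcat_mul, EL_succ_mul p.succ_pos, extendOne_mul_vcat, hE,
    trailingTwo_mul_vcat_vcat]
  simp only [Matrix.zero_mul, Matrix.mul_zero, add_zero, vcat_sub, frobSq_vcat, zero_sub,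
    frobSq_neg]
  rfl

lemma frobSq_Hbar_mul_update_le {Yprev : Matrix (Fin p × Fin L) (Fin L) ℂ}
    (hE : S.Qbar * (EL (p+1) L * S0) = vcat (S.R * Yprev) S.Ct)
    (Y : Matrix (Fin (p+1) × Fin L) (Fin L) ℂ) :
    frobSq (Hbar * (vcat Yprev 0 + vcat (-(S.R⁻¹ * S.Z * (S.N⁻¹ * S.C))) (S.N⁻¹ * S.C))
        - EL (p+2) L * S0) ≤ frobSq (Hbar * Y - EL (p+2) L * S0) := by
  refine frobSq_mul_sub_le_of_eq_add (S.frobSq_Hbar_mul_sub hE) ?_ Y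
  rw [vcat_add, zero_add, ← sub_eq_add_neg, twoBlock_mul_vcat_sub_inv S.R_inv,
    mul_nonsing_inv_cancel_left _ _ ((isUnit_iff_isUnit_det _).mp S.N_inv)]

lemma qbar_mul_Hsq :
    S.Qbar * Hbar.submatrix (Prod.map Fin.castSucc id) id = twoBlock S.R S.Z S.Hhat := by
  have hsplit : extendOne S.Qbar * Hbar = vcat (S.Qbar * blockInit Hbar) (blockLast Hbar) := by
    have h := extendOne_mul_vcat S.Qbar (blockInit Hbar) (blockLast Hbar)
    rwa [vcat_blockInit_blockLast] at h
  have h := congrArg blockInit (hsplit.symm.trans S.qr_split)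
  rw [blockInit_vcat, blockInit_threeBlock] at h
  exact h

lemma frobSq_sub_Hsq_mul {Yprev : Matrix (Fin p × Fin L) (Fin L) ℂ}
    (hE : S.Qbar * (EL (p+1) L * S0) = vcat (S.R * Yprev) S.Ct)
    (Y : Matrix (Fin (p+1) × Fin L) (Fin L) ℂ) :
    frobSq (EL (p+1) L * S0
        - Hbar.submatrix (Prod.map Fin.castSucc id) (Prod.map Fin.castSucc id) * Yprev
        - Hbar.submatrix (Prod.map Fin.castSucc id) id * Y)
      = frobSq (vcat 0 S.Ct - twoBlock S.R S.Z S.Hhat * Y) := by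
  rw [← frobSq_unitary_mul S.Qbar_unit, Matrix.mul_sub, Matrix.mul_sub, hE, ← Matrix.mul_assoc,
    S.qr_prev, ← Matrix.mul_assoc, S.qbar_mul_Hsq, stackZero_eq_vcat, vcat_mul, vcat_sub,
    sub_self, Matrix.zero_mul, sub_zero]

end QRSetup

/-- The progressive update formulas for block GMRES and generalized
block FOM: (i) `X_j^(G) = X_{j-1}^(G) + W_j Y_{S_j}^(G)` with
`Y_{S_j}^(G) = [-R_{j-1}⁻¹ Z_j N_j⁻¹ C_j ; N_j⁻¹ C_j]`; (ii) `Y_{S_j}^(G)` is the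
unique minimizer of `‖[E_L S₀ - H̄_{j-1} Y_{j-1}^(G); 0] - H̄_j Y‖_F`; (iii)
`Ỹ_{S_j}^(F) = [-R_{j-1}⁻¹ Z_j N̂_j† Ĉ_j ; N̂_j† Ĉ_j]` is a minimizer of
`‖E_L S₀ - H̄_{j-1} Y_{j-1}^(G) - H_j Y‖_F`. -/
theorem stmt6 {n L p : ℕ} (D : BlockArnoldi n L p) (S : QRSetup L p D.Hbar D.S0)
    (Yj : Matrix (Fin (p+1) × Fin L) (Fin L) ℂ) (hYj : IsBlockGMRESj D Yj)
    (Yprev : Matrix (Fin p × Fin L) (Fin L) ℂ) (hYprev : IsBlockGMRESprev D Yprev)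
    (Nhd : Matrix (Fin L) (Fin L) ℂ) (hNhd : IsMoorePenrose S.Nhat Nhd) :
    ∀ YSG : Matrix (Fin (p+1) × Fin L) (Fin L) ℂ,
      YSG = vcat (-(S.R⁻¹ * S.Z * (S.N⁻¹ * S.C))) (S.N⁻¹ * S.C) →
    ∀ YSF : Matrix (Fin (p+1) × Fin L) (Fin L) ℂ,
      YSF = vcat (-(S.R⁻¹ * S.Z * (Nhd * S.Chat))) (Nhd * S.Chat) →
    ∀ T : Matrix (Fin (p+2) × Fin L) (Fin L) ℂ,
      T = vcat (EL (p+1) L * D.S0 - D.Hprev * Yprev) 0 →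
    -- (i)
    (D.X0 + D.Wfull * Yj = (D.X0 + D.Wprev * Yprev) + D.Wfull * YSG) ∧
    -- (ii)
    (∀ Y : Matrix (Fin (p+1) × Fin L) (Fin L) ℂ, frobSq (T - D.Hbar * YSG) ≤ frobSq (T - D.Hbar * Y)) ∧
    (∀ Y : Matrix (Fin (p+1) × Fin L) (Fin L) ℂ, (∀ Y', frobSq (T - D.Hbar * Y) ≤ frobSq (T - D.Hbar * Y')) → Y = YSG) ∧
    -- (iii)
    (∀ Y : Matrix (Fin (p+1) × Fin L) (Fin L) ℂ, frobSq (EL (p+1) L * D.S0 - D.Hprev * Yprev - D.Hsq * YSF)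
        ≤ frobSq (EL (p+1) L * D.S0 - D.Hprev * Yprev - D.Hsq * Y)) := by
  intro YSG hYSG YSF hYSF T hT
  have hE := S.qbar_mul_EL_eq_vcat hYprev
  have hYj_eq : Yj = vcat Yprev 0 + YSG :=
    ((isUniqueFrobMin_iff.mp hYj).2 _ (hYSG ▸ S.frobSq_Hbar_mul_update_le hE)).symm
  have hT' : T = EL (p+2) L * D.S0 - D.Hbar * vcat Yprev 0 := by
    rw [hT, D.Hbar_mul_vcat_zero, EL_succ_mul p.succ_pos, vcat_sub, sub_zero]
  have hmin : IsUniqueFrobMin D.Hbar T YSG := by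
    simpa only [hT', hYj_eq, add_sub_cancel_left] using hYj.sub_mul (vcat Yprev 0)
  rw [isUniqueFrobMin_iff] at hmin
  refine ⟨?_, fun Y => ?_, fun Y hY => ?_, fun Y => ?_⟩
  · rw [hYj_eq, Matrix.mul_add, D.Wfull_mul_vcat_zero, add_assoc]
  · rw [frobSq_sub_comm, frobSq_sub_comm T]
    exact hmin.1 Y
  · exact hmin.2 Y fun Y' =>
      (frobSq_sub_comm _ _).trans_le ((hY Y').trans_eq (frobSq_sub_comm _ _))
  · unfold BlockArnoldi.Hprev BlockArnoldi.Hsq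
    rw [S.frobSq_sub_Hsq_mul hE, S.frobSq_sub_Hsq_mul hE, hYSF]
    exact frobSq_vcat_zero_sub_twoBlock_mul_le S.R_inv S.Z S.Qhatb_unit (S.Nhat_def ▸ hNhd)
      S.Ct Y
end
end
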